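/- arXiv:2103.08904 — 5 statements merged into one kernel-verified Lean document; each statement's English description precedes it below -/
import Mathlib

section
/- For all complex numbers z, all nonzero real λ, and all n ≥ 0, we have ∑_{j=0}^{n} (-1)^j · C(n,j) · (z−j)_{n,λ} = n!, where (x)_{n,λ} = x(x−λ)(x−2λ)⋯(x−(n−1)λ) is the λ-falling factorial (with (x)_{0,λ} = 1). -/
noncomputable def dffC (lam : ℝ) (z : ℂ) (n : ℕ) : ℂ :=
  ∏ i ∈ Finset.range n, (z - (i : ℂ) * (lam : ℂ))

/-!
The alternating sum is the `n`-th forward difference (step `1`) of `w ↦ (w)_{n,λ}` at `z - n`.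
The `n`-th forward difference of a polynomial of degree at most `n` is the constant
`n! · (coefficient of degree n)`, and `(w)_{n,λ}` is monic of degree `n` in `w`.
-/

open Finset Polynomial Nat

theorem fwdDiff_iter_sub_eq_sum {R : Type*} [CommRing R] (f : R → R) (n : ℕ) (z : R) :
    (fwdDiff 1)^[n] f (z - n) = ∑ j ∈ range (n + 1), (-1 : R) ^ j * n.choose j * f (z - j) := by
  rw [fwdDiff_iter_eq_sum_shift, ← sum_range_reflect]
  refine sum_congr rfl fun j hj => ?_
  have hjn : j ≤ n := Nat.lt_succ_iff.mp (mem_range.mp hj)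
  rw [Nat.add_sub_cancel, Nat.sub_sub_self hjn, Nat.choose_symm hjn, zsmul_eq_mul, nsmul_one,
    Nat.cast_sub hjn]
  push_cast
  ring_nf

theorem Polynomial.sum_neg_one_pow_mul_choose_mul_eval_sub {R : Type*} [CommRing R]
    (p : R[X]) {n : ℕ} (hp : p.natDegree ≤ n) (z : R) :
    ∑ j ∈ range (n + 1), (-1 : R) ^ j * n.choose j * p.eval (z - j) = n ! * p.coeff n := by
  rw [← fwdDiff_iter_sub_eq_sum (fun x => p.eval x)]
  rcases hp.lt_or_eq with hlt | rfl
  · rw [fwdDiff_iter_eq_zero_of_degree_lt hlt, coeff_eq_zero_of_natDegree_lt hlt, Pi.zero_apply,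
      mul_zero]
  · rw [fwdDiff_iter_degree_eq_factorial]
    simp [mul_comm]

theorem dffC_eq_eval (lam : ℝ) (z : ℂ) (n : ℕ) :
    dffC lam z n = (∏ i ∈ range n, (X - C ((i : ℂ) * lam))).eval z := by
  simp [dffC, eval_prod]

theorem stmt0_general (z : ℂ) (lam : ℝ) (n : ℕ) :
    ∑ j ∈ Finset.range (n + 1),
      (-1 : ℂ) ^ j * (Nat.choose n j : ℂ) * dffC lam (z - (j : ℂ)) n
      = (Nat.factorial n : ℂ) := by
  set p : ℂ[X] := ∏ i ∈ range n, (X - C ((i : ℂ) * lam))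
  have hmonic : p.Monic := monic_prod_X_sub_C _ _
  have hdeg : p.natDegree = n := by
    rw [natDegree_prod_of_monic _ _ fun i _ => monic_X_sub_C _]
    simp only [natDegree_X_sub_C, sum_const, card_range, smul_eq_mul, mul_one]
  simp only [dffC_eq_eval]
  rw [p.sum_neg_one_pow_mul_choose_mul_eval_sub hdeg.le, ← hdeg, hmonic.coeff_natDegree, mul_one]

theorem stmt0 (z : ℂ) (lam : ℝ) (hlam : lam ≠ 0) (n : ℕ) :
    ∑ j ∈ Finset.range (n + 1),
      (-1 : ℂ) ^ j * (Nat.choose n j : ℂ) * dffC lam (z - (j : ℂ)) n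
      = (Nat.factorial n : ℂ) :=
  stmt0_general z lam n
end

section
/- For all nonnegative integers n and j, ∑_{k=j}^{n} C(n,k)·C(k,j)·(−1)^{k−j}·(1)_{n−k,λ}·⟨1⟩_{k−j,λ} = δ_{n,j}, where δ is the Kronecker delta. -/
/-!
Substituting `k = j + m` and using `C(n, k) C(k, j) = C(n, j) C(n - j, m)`, the sum becomes
`C(n, j) ∑ₘ C(n - j, m) (-1)ᵐ ⟨1⟩_{m,λ} (1)_{n-j-m,λ}`. Since `(-1)ᵐ ⟨1⟩_{m,λ} = (-1)_{m,λ}`,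
the λ-Vandermonde identity `(x + y)_{N,λ} = ∑ C(N, m) (x)_{m,λ} (y)_{N-m,λ}` collapses the inner
sum to `(0)_{n-j,λ}`, which vanishes unless `n = j`.
-/

open Finset

noncomputable def dff (lam x : ℝ) (n : ℕ) : ℝ := ∏ i ∈ Finset.range n, (x - i * lam)

noncomputable def drf (lam x : ℝ) (n : ℕ) : ℝ := ∏ i ∈ Finset.range n, (x + i * lam)

lemma dff_succ (lam x : ℝ) (n : ℕ) : dff lam x (n + 1) = dff lam x n * (x - n * lam) :=
  prod_range_succ _ n

lemma dff_zero_succ (lam : ℝ) (n : ℕ) : dff lam 0 (n + 1) = 0 :=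
  prod_eq_zero (mem_range.2 n.succ_pos) (by simp)

lemma neg_one_pow_mul_drf (lam x : ℝ) (n : ℕ) : (-1) ^ n * drf lam x n = dff lam (-x) n := by
  rw [drf, dff, ← card_range n, ← prod_const, card_range, ← prod_mul_distrib]
  exact prod_congr rfl fun i _ => by ring

theorem dff_add (lam x y : ℝ) (n : ℕ) :
    dff lam (x + y) n =
      ∑ ij ∈ antidiagonal n, (n.choose ij.1 : ℝ) * (dff lam x ij.1 * dff lam y ij.2) := by
  induction n with
  | zero => simp [dff]
  | succ n ih =>
    rw [sum_antidiagonal_choose_succ_mul (fun i j => dff lam x i * dff lam y j), ← sum_add_distrib,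
      dff_succ, ih, sum_mul]
    refine sum_congr rfl fun ij hij => ?_
    rw [HasAntidiagonal.mem_antidiagonal] at hij
    rw [Nat.choose_symm_of_eq_add hij.symm, dff_succ, dff_succ, ← hij]
    push_cast
    ring

lemma sum_choose_mul_dff_neg_mul_dff (lam x : ℝ) (n : ℕ) :
    ∑ m ∈ range (n + 1), (n.choose m : ℝ) * (dff lam (-x) m * dff lam x (n - m)) =
      if n = 0 then 1 else 0 := by
  rw [← Nat.sum_antidiagonal_eq_sum_range_succ
      (fun i j => (n.choose i : ℝ) * (dff lam (-x) i * dff lam x j)), ← dff_add, neg_add_cancel]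
  cases n with
  | zero => simp [dff]
  | succ n => simp [dff_zero_succ]

theorem stmt1_general (lam : ℝ) (n j : ℕ) :
    ∑ k ∈ Finset.Icc j n, (Nat.choose n k : ℝ) * (Nat.choose k j : ℝ) *
      (-1 : ℝ) ^ (k - j) * dff lam 1 (n - k) * drf lam 1 (k - j)
      = if n = j then 1 else 0 := by
  rcases lt_or_ge n j with hnj | hjn
  · rw [Icc_eq_empty_of_lt hnj, sum_empty, if_neg hnj.ne]
  obtain ⟨N, rfl⟩ := Nat.exists_eq_add_of_le hjn
  have hchoose (m : ℕ) : ((j + N).choose (j + m) * (j + m).choose j : ℝ) =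
      (j + N).choose j * N.choose m := by
    exact_mod_cast (Nat.choose_mul (Nat.le_add_right j m)).trans (by simp)
  calc _ = ∑ m ∈ range (N + 1), ((j + N).choose (j + m) * (j + m).choose j : ℝ) *
        ((-1) ^ m * drf lam 1 m * dff lam 1 (N - m)) := by
        rw [← Ico_add_one_right_eq_Icc, sum_Ico_eq_sum_range]
        refine sum_congr (by congr 1; omega) fun m _ => ?_
        rw [Nat.add_sub_cancel_left, Nat.add_sub_add_left]
        ring
    _ = (j + N).choose j *
          ∑ m ∈ range (N + 1), (N.choose m : ℝ) * (dff lam (-1) m * dff lam 1 (N - m)) := by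
        simp_rw [hchoose, neg_one_pow_mul_drf, mul_sum, mul_assoc]
    _ = _ := by
        rw [sum_choose_mul_dff_neg_mul_dff]
        split_ifs <;> simp_all

theorem stmt1 (lam : ℝ) (hlam : lam ≠ 0) (n j : ℕ) :
    ∑ k ∈ Finset.Icc j n, (Nat.choose n k : ℝ) * (Nat.choose k j : ℝ) *
      (-1 : ℝ) ^ (k - j) * dff lam 1 (n - k) * drf lam 1 (k - j)
      = if n = j then 1 else 0 :=
  stmt1_general lam n j
end

section
/- For a positive integer m, nonzero real λ, and nonnegative integers n, k with k ≤ n, the degenerate Whitney numbers of the second kind satisfy W_{m,λ}(n,k) = (1/(k!·m^k))·∑_{l=0}^{k} C(k,l)·(−1)^{k−l}·(lm+1)_{n,λ}. Moreover, if k > n the right-hand side equals 0. -/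
open Finset

open scoped Nat

/-! Setting `x = l ∈ ℕ` in the defining expansion turns `(x)_j` into `l.descFactorial j = j! * C(l, j)`.
The alternating sum `∑ₗ C(k, l) (-1)^(k-l) f(l)` is the `k`-th forward difference of `f` at `0`,
and `Δ^k C(·, j) (0) = δ_{jk}`, so it picks out the `j = k` term `k! m^k W(n, k)` of the expansion,
which is absent when `k > n`. -/

lemma dff_one_natCast (l j : ℕ) : dff 1 (l : ℝ) j = l.descFactorial j := by
  simp only [dff, mul_one, ← descPochhammer_eval_eq_prod_range, descPochhammer_eval_eq_descFactorial]

lemma sum_neg_one_pow_mul_choose_mul_choose (k j : ℕ) :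
    ∑ l ∈ range (k + 1), (-1 : ℤ) ^ (k - l) * k.choose l * l.choose j = if k = j then 1 else 0 := by
  rw [← fwdDiff_iter_choose_zero, fwdDiff_iter_eq_sum_shift]
  simp

lemma sum_choose_mul_neg_one_pow_mul_descFactorial {R : Type*} [CommRing R] (k j : ℕ) :
    ∑ l ∈ range (k + 1), (k.choose l : R) * (-1) ^ (k - l) * l.descFactorial j =
      if k = j then (k ! : R) else 0 := by
  have h := congrArg (fun z : ℤ => (j ! * z : R)) (sum_neg_one_pow_mul_choose_mul_choose k j)
  simp only [Int.cast_sum, mul_sum] at h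
  convert h using 2 with l
  · push_cast [Nat.descFactorial_eq_factorial_mul_choose]; ring
  · split_ifs with hkj <;> simp [hkj]

lemma sum_choose_mul_neg_one_pow_mul_sum_descFactorial {R : Type*} [CommRing R] (c : ℕ → R)
    (n k : ℕ) :
    ∑ l ∈ range (k + 1), (k.choose l : R) * (-1) ^ (k - l) *
        ∑ j ∈ range (n + 1), c j * l.descFactorial j =
      if k ≤ n then k ! * c k else 0 := by
  simp_rw [mul_sum]
  rw [sum_comm]
  simp_rw [mul_left_comm _ (c _), ← mul_sum, sum_choose_mul_neg_one_pow_mul_descFactorial,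
    mul_ite, mul_zero, sum_ite_eq, mem_range, Nat.lt_succ_iff, mul_comm]

theorem stmt8_general (m : ℕ) (hm : 1 ≤ m) (lam : ℝ) (W : ℕ → ℕ → ℝ)
    (hW : ∀ (x : ℝ) (n : ℕ), dff lam ((m : ℝ) * x + 1) n =
      ∑ k ∈ Finset.range (n + 1), W n k * (m : ℝ) ^ k * dff 1 x k)
    (n k : ℕ) :
    (k ≤ n → W n k = (1 / ((Nat.factorial k : ℝ) * (m : ℝ) ^ k)) *
      ∑ l ∈ Finset.range (k + 1), (Nat.choose k l : ℝ) * (-1 : ℝ) ^ (k - l) *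
        dff lam ((l : ℝ) * m + 1) n) ∧
    (n < k → (1 / ((Nat.factorial k : ℝ) * (m : ℝ) ^ k)) *
      ∑ l ∈ Finset.range (k + 1), (Nat.choose k l : ℝ) * (-1 : ℝ) ^ (k - l) *
        dff lam ((l : ℝ) * m + 1) n = 0) := by
  have hsum : ∑ l ∈ range (k + 1), (k.choose l : ℝ) * (-1) ^ (k - l) *
      dff lam ((l : ℝ) * m + 1) n = if k ≤ n then k ! * (W n k * m ^ k) else 0 := by
    simp_rw [mul_comm _ (m : ℝ), hW, dff_one_natCast]
    exact sum_choose_mul_neg_one_pow_mul_sum_descFactorial _ n k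
  have hm' : (m : ℝ) ≠ 0 := Nat.cast_ne_zero.mpr (by omega)
  refine ⟨fun hkn => ?_, fun hnk => ?_⟩
  · rw [hsum, if_pos hkn]
    field_simp
  · rw [hsum, if_neg (by omega), mul_zero]

theorem stmt8 (m : ℕ) (hm : 1 ≤ m) (lam : ℝ) (hlam : lam ≠ 0) (W : ℕ → ℕ → ℝ)
    (hW : ∀ (x : ℝ) (n : ℕ), dff lam ((m : ℝ) * x + 1) n =
      ∑ k ∈ Finset.range (n + 1), W n k * (m : ℝ) ^ k * dff 1 x k)
    (n k : ℕ) :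
    (k ≤ n → W n k = (1 / ((Nat.factorial k : ℝ) * (m : ℝ) ^ k)) *
      ∑ l ∈ Finset.range (k + 1), (Nat.choose k l : ℝ) * (-1 : ℝ) ^ (k - l) *
        dff lam ((l : ℝ) * m + 1) n) ∧
    (n < k → (1 / ((Nat.factorial k : ℝ) * (m : ℝ) ^ k)) *
      ∑ l ∈ Finset.range (k + 1), (Nat.choose k l : ℝ) * (-1 : ℝ) ^ (k - l) *
        dff lam ((l : ℝ) * m + 1) n = 0) :=
  stmt8_general m hm lam W hW n k
end

section
/- For a positive integer m, nonzero real λ, real x, and n ≥ 0, the degenerate Dowling polynomial satisfies D_{m,λ}(n,x) = ∑_{i=0}^{n} C(n,i)·m^i·(1)_{n−i,λ}·Bel_{i,λ/m}(x/m), where Bel_{i,μ}(y) = ∑_{k=0}^{i} S_{2,μ}(i,k)·y^k is the degenerate Bell polynomial with parameter μ. -/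
open Finset

/-- Vandermonde identity for degenerate falling factorials. -/
lemma dff_vandermonde (lam a b : ℝ) (n : ℕ) :
    dff lam (a + b) n = ∑ i ∈ Finset.range (n + 1),
      (Nat.choose n i : ℝ) * dff lam a i * dff lam b (n - i) := by
  induction n with
  | zero => simp [dff]
  | succ n ih =>
      rw [dff_succ, ih, Finset.sum_mul]
      have key : ∀ i ∈ Finset.range (n + 1),
          (Nat.choose n i : ℝ) * dff lam a i * dff lam b (n - i) * (a + b - n * lam)
          = ((Nat.choose n i : ℝ) * dff lam a (i+1) * dff lam b (n - i))
            + ((Nat.choose n i : ℝ) * dff lam a i * dff lam b (n - i + 1)) := by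
        intro i hi
        rw [Finset.mem_range] at hi
        have hi' : i ≤ n := Nat.lt_succ_iff.mp hi
        have hsplit : a + b - n * lam = (a - i * lam) + (b - (n - i : ℕ) * lam) := by
          have : ((n - i : ℕ) : ℝ) = (n : ℝ) - (i : ℝ) := by
            push_cast [Nat.cast_sub hi']; ring
          rw [this]; ring
        rw [hsplit, dff_succ, dff_succ]
        ring
      rw [Finset.sum_congr rfl key, Finset.sum_add_distrib]
      have h1 : ∑ i ∈ Finset.range (n + 1),
          (Nat.choose n i : ℝ) * dff lam a (i+1) * dff lam b (n - i)
          = ∑ i ∈ Finset.range (n + 2), (if i = 0 then 0 else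
              (Nat.choose n (i-1) : ℝ) * dff lam a i * dff lam b (n + 1 - i)) := by
        rw [Finset.sum_range_succ' _ (n+1), if_pos rfl, add_zero]
        apply Finset.sum_congr rfl
        intro i hi
        rw [if_neg (Nat.succ_ne_zero i)]
        congr 2
        omega
      have h2 : ∑ i ∈ Finset.range (n + 1),
          (Nat.choose n i : ℝ) * dff lam a i * dff lam b (n - i + 1)
          = ∑ i ∈ Finset.range (n + 2), (if i = n + 1 then 0 else
              (Nat.choose n i : ℝ) * dff lam a i * dff lam b (n + 1 - i)) := by
        rw [Finset.sum_range_succ _ (n+1), if_pos rfl, add_zero]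
        apply Finset.sum_congr rfl
        intro i hi
        rw [Finset.mem_range] at hi
        rw [if_neg (by omega)]
        congr 2
        omega
      rw [h1, h2, ← Finset.sum_add_distrib]
      apply Finset.sum_congr rfl
      intro i hi
      rw [Finset.mem_range] at hi
      by_cases h0 : i = 0
      · subst h0
        rw [if_pos rfl, if_neg (by omega)]
        simp
      · obtain ⟨j, rfl⟩ := Nat.exists_eq_succ_of_ne_zero h0
        rw [if_neg h0, Nat.succ_sub_one]
        by_cases hn1 : j + 1 = n + 1
        · rw [if_pos hn1]
          have hj : j = n := by omega
          subst hj
          simp [Nat.choose_self]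
        · rw [if_neg hn1]
          have : ((n+1).choose (j+1) : ℝ) = (n.choose j : ℝ) + (n.choose (j+1) : ℝ) := by
            rw [Nat.choose_succ_succ]; push_cast; ring
          rw [this]; ring

/-- scaling lemma -/
lemma dff_scale (lam c y : ℝ) (hc : c ≠ 0) (n : ℕ) :
    dff lam (c * y) n = c ^ n * dff (lam / c) y n := by
  induction n with
  | zero => simp [dff]
  | succ n ih =>
      rw [dff_succ, dff_succ, ih, pow_succ]
      have hc' : c * (lam / c) = lam := mul_div_cancel₀ lam hc
      have hkey : c * (y - n * (lam / c)) = c * y - n * lam := by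
        rw [mul_sub, ← mul_assoc, mul_comm c (n:ℝ), mul_assoc, hc']
      rw [← hkey]; ring

/-- coefficient uniqueness in the falling-factorial basis -/
lemma coeff_unique (N : ℕ) (a b : ℕ → ℝ)
    (h : ∀ y : ℝ, ∑ k ∈ Finset.range N, a k * dff 1 y k
       = ∑ k ∈ Finset.range N, b k * dff 1 y k) :
    ∀ k, k < N → a k = b k := by
  intro k
  induction k using Nat.strong_induction_on with
  | _ k ih =>
    intro hk
    have hy := h (k : ℝ)
    have hzero : ∀ j ∈ Finset.range N, j ≠ k →
        a j * dff 1 (k : ℝ) j - b j * dff 1 (k : ℝ) j = 0 := by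
      intro j hj hjk
      rcases lt_or_gt_of_ne hjk with hlt | hgt
      · rw [ih j hlt (by rw [Finset.mem_range] at hj; exact hj)]; ring
      · have : dff 1 (k : ℝ) j = 0 := by
          apply Finset.prod_eq_zero (Finset.mem_range.mpr hgt)
          simp
        rw [this]; ring
    have hk' : k ∈ Finset.range N := Finset.mem_range.mpr hk
    have h1 : ∑ j ∈ Finset.range N, (a j * dff 1 (k:ℝ) j - b j * dff 1 (k:ℝ) j)
        = a k * dff 1 (k:ℝ) k - b k * dff 1 (k:ℝ) k :=
      Finset.sum_eq_single_of_mem k hk' hzero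
    rw [Finset.sum_sub_distrib, hy, sub_self] at h1
    have hne : dff 1 (k : ℝ) k ≠ 0 := by
      unfold dff
      rw [Finset.prod_ne_zero_iff]
      intro i hi
      rw [Finset.mem_range] at hi
      have : (i : ℝ) < (k : ℝ) := by exact_mod_cast hi
      simp only [mul_one]
      linarith
    have h2 : (a k - b k) * dff 1 (k : ℝ) k = 0 := by rw [sub_mul]; exact h1.symm
    rcases mul_eq_zero.mp h2 with h' | h'
    · exact sub_eq_zero.mp h'
    · exact absurd h' hne

theorem stmt15 (m : ℕ) (hm : 1 ≤ m) (lam : ℝ) (hlam : lam ≠ 0) (x : ℝ)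
    (W S2m : ℕ → ℕ → ℝ)
    (hW : ∀ (y : ℝ) (n : ℕ), dff lam ((m : ℝ) * y + 1) n =
      ∑ k ∈ Finset.range (n + 1), W n k * (m : ℝ) ^ k * dff 1 y k)
    (hS2m : ∀ (y : ℝ) (n : ℕ), dff (lam / m) y n =
      ∑ k ∈ Finset.range (n + 1), S2m n k * dff 1 y k)
    (n : ℕ) :
    ∑ k ∈ Finset.range (n + 1), W n k * x ^ k =
      ∑ i ∈ Finset.range (n + 1), (Nat.choose n i : ℝ) * (m : ℝ) ^ i *
        dff lam 1 (n - i) *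
        ∑ k ∈ Finset.range (i + 1), S2m i k * (x / m) ^ k := by
  have hm0 : (m : ℝ) ≠ 0 := by positivity
  set A : ℕ → ℝ := fun k => W n k * (m : ℝ) ^ k with hA
  set B : ℕ → ℝ := fun k => ∑ i ∈ Finset.range (n + 1),
      (Nat.choose n i : ℝ) * (m : ℝ) ^ i * dff lam 1 (n - i) *
      (if k ≤ i then S2m i k else 0) with hB
  have hBsum : ∀ t : ℕ → ℝ, ∑ k ∈ Finset.range (n + 1), B k * t k
      = ∑ i ∈ Finset.range (n + 1), (Nat.choose n i : ℝ) * (m : ℝ) ^ i *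
        dff lam 1 (n - i) * ∑ k ∈ Finset.range (i + 1), S2m i k * t k := by
    intro t
    simp only [hB, Finset.sum_mul]
    rw [Finset.sum_comm]
    apply Finset.sum_congr rfl
    intro i hi
    rw [Finset.mem_range] at hi
    rw [Finset.mul_sum]
    rw [← Finset.sum_subset (Finset.range_subset_range.mpr (by omega : i + 1 ≤ n + 1))]
    · apply Finset.sum_congr rfl
      intro k hk
      rw [Finset.mem_range] at hk
      rw [if_pos (by omega)]
      ring
    · intro k _ hk
      rw [Finset.mem_range, not_lt] at hk
      rw [if_neg (by omega)]
      ring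
  have hAB : ∀ k, k < n + 1 → A k = B k := by
    apply coeff_unique
    intro y
    have lhs : ∑ k ∈ Finset.range (n + 1), A k * dff 1 y k
        = dff lam ((m : ℝ) * y + 1) n := by
      rw [hW y n]
    rw [lhs, dff_vandermonde lam ((m : ℝ) * y) 1 n, hBsum (fun k => dff 1 y k)]
    apply Finset.sum_congr rfl
    intro i hi
    rw [dff_scale lam (m : ℝ) y hm0 i, hS2m y i]
    ring
  have hlhs : ∑ k ∈ Finset.range (n + 1), W n k * x ^ k
      = ∑ k ∈ Finset.range (n + 1), A k * (x / m) ^ k := by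
    apply Finset.sum_congr rfl
    intro k _
    simp only [hA, div_pow]
    field_simp
  rw [hlhs]
  rw [Finset.sum_congr rfl (fun k hk => by
    rw [hAB k (Finset.mem_range.mp hk)])]
  exact hBsum (fun k => (x / m) ^ k)
end

section
/- For nonzero real λ, real x, and n ≥ 0, x·D_{1,λ}(n,x) = Bel_{n+1,λ}(x) + nλ·Bel_{n,λ}(x), where D_{1,λ}(n,x) is the degenerate Dowling polynomial with m = 1 and Bel_{n,λ}(x) the degenerate Bell polynomial. -/
open Finset

lemma dff_nat_eq_zero (m k : ℕ) (h : m < k) : dff 1 (m:ℝ) k = 0 := by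
  apply Finset.prod_eq_zero (Finset.mem_range.2 h)
  simp

lemma dff_nat_ne_zero (m : ℕ) : dff 1 (m:ℝ) m ≠ 0 := by
  apply Finset.prod_ne_zero_iff.2
  intro i hi
  have hi' : (i:ℝ) < m := by exact_mod_cast Finset.mem_range.1 hi
  intro hcontra
  nlinarith

lemma indep (N : ℕ) (c : ℕ → ℝ)
    (h : ∀ y : ℝ, ∑ k ∈ Finset.range N, c k * dff 1 y k = 0) :
    ∀ m, m < N → c m = 0 := by
  intro m
  induction m using Nat.strong_induction_on with
  | _ m ih =>
    intro hm
    have h0 := h (m : ℝ)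
    rw [Finset.sum_eq_single m ?_ ?_] at h0
    · rcases mul_eq_zero.1 h0 with h1 | h1
      · exact h1
      · exact absurd h1 (dff_nat_ne_zero m)
    · intro k hk hne
      rcases lt_or_gt_of_ne hne with h1 | h1
      · rw [ih k h1 (lt_trans h1 hm)]; ring
      · rw [dff_nat_eq_zero m k h1]; ring
    · intro h'; exact absurd (Finset.mem_range.2 hm) h'

lemma dff_shift (y : ℝ) (k : ℕ) : dff 1 y (k+1) = y * dff 1 (y-1) k := by
  unfold dff
  rw [Finset.prod_range_succ']
  simp only [Nat.cast_zero, zero_mul, sub_zero]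
  rw [mul_comm]
  congr 1
  apply Finset.prod_congr rfl
  intro i _
  push_cast
  ring

lemma dff_step (lam y : ℝ) (n : ℕ) : dff lam y (n+1) = dff lam y n * (y - n * lam) := by
  unfold dff
  rw [Finset.prod_range_succ]

theorem stmt17 (lam : ℝ) (hlam : lam ≠ 0) (x : ℝ) (W S2 : ℕ → ℕ → ℝ)
    (hW : ∀ (y : ℝ) (n : ℕ), dff lam (y + 1) n =
      ∑ k ∈ Finset.range (n + 1), W n k * dff 1 y k)
    (hS2 : ∀ (y : ℝ) (n : ℕ), dff lam y n =
      ∑ k ∈ Finset.range (n + 1), S2 n k * dff 1 y k)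
    (n : ℕ) :
    x * ∑ k ∈ Finset.range (n + 1), W n k * x ^ k =
      (∑ k ∈ Finset.range (n + 2), S2 (n + 1) k * x ^ k)
      + (n : ℝ) * lam * ∑ k ∈ Finset.range (n + 1), S2 n k * x ^ k := by
  set c : ℕ → ℝ := fun k =>
    S2 (n+1) k + (n:ℝ) * lam * (if k < n+1 then S2 n k else 0)
      - (if k = 0 then 0 else W n (k-1)) with hcdef
  have H : ∀ y : ℝ, ∑ k ∈ Finset.range (n+2), c k * dff 1 y k = 0 := by
    intro y
    have e1 : ∑ k ∈ Finset.range (n+2), S2 (n+1) k * dff 1 y k = dff lam y (n+1) :=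
      (hS2 y (n+1)).symm
    have e2 : ∑ k ∈ Finset.range (n+2), (if k < n+1 then S2 n k else 0) * dff 1 y k
        = dff lam y n := by
      rw [Finset.sum_range_succ, if_neg (lt_irrefl (n+1)), zero_mul, add_zero, hS2 y n]
      apply Finset.sum_congr rfl
      intro k hk
      rw [if_pos (Finset.mem_range.1 hk)]
    have e3 : ∑ k ∈ Finset.range (n+2), (if k = 0 then (0:ℝ) else W n (k-1)) * dff 1 y k
        = y * dff lam y n := by
      rw [Finset.sum_range_succ']
      have hcongr : ∀ k ∈ Finset.range (n+1),
          (if k+1 = 0 then (0:ℝ) else W n (k+1-1)) * dff 1 y (k+1)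
          = y * (W n k * dff 1 (y-1) k) := by
        intro k _
        rw [if_neg (Nat.succ_ne_zero k), Nat.add_sub_cancel, dff_shift]
        ring
      rw [Finset.sum_congr rfl hcongr, ← Finset.mul_sum, ← hW (y-1) n]
      have hy : y - 1 + 1 = y := by ring
      rw [hy]
      simp
    have split : ∑ k ∈ Finset.range (n+2), c k * dff 1 y k
        = (∑ k ∈ Finset.range (n+2), S2 (n+1) k * dff 1 y k)
          + (n:ℝ) * lam * (∑ k ∈ Finset.range (n+2),
              (if k < n+1 then S2 n k else 0) * dff 1 y k)
          - (∑ k ∈ Finset.range (n+2), (if k = 0 then (0:ℝ) else W n (k-1)) * dff 1 y k) := by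
      rw [Finset.mul_sum, ← Finset.sum_add_distrib, ← Finset.sum_sub_distrib]
      apply Finset.sum_congr rfl
      intro k _
      simp only [hcdef]
      ring
    rw [split, e1, e2, e3, dff_step]
    ring
  have hc0 := indep (n+2) c H
  have key : ∀ k, k < n+1 →
      W n k = S2 (n+1) (k+1) + (n:ℝ) * lam * (if k+1 < n+1 then S2 n (k+1) else 0) := by
    intro k hk
    have h1 := hc0 (k+1) (by omega)
    simp only [hcdef, if_neg (Nat.succ_ne_zero k), Nat.add_sub_cancel] at h1
    linarith
  have key0 : S2 (n+1) 0 + (n:ℝ) * lam * S2 n 0 = 0 := by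
    have h1 := hc0 0 (by omega)
    simp only [hcdef] at h1
    norm_num at h1
    linarith
  have lhs : x * ∑ k ∈ Finset.range (n+1), W n k * x ^ k
      = ∑ k ∈ Finset.range (n+1),
          (S2 (n+1) (k+1) + (n:ℝ) * lam * (if k+1 < n+1 then S2 n (k+1) else 0)) * x ^ (k+1) := by
    rw [Finset.mul_sum]
    apply Finset.sum_congr rfl
    intro k hk
    rw [← key k (Finset.mem_range.1 hk)]
    ring
  have rhs : (∑ k ∈ Finset.range (n+2), S2 (n+1) k * x ^ k)
      + (n:ℝ) * lam * ∑ k ∈ Finset.range (n+1), S2 n k * x ^ k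
      = ∑ k ∈ Finset.range (n+2),
          (S2 (n+1) k + (n:ℝ) * lam * (if k < n+1 then S2 n k else 0)) * x ^ k := by
    have e2' : ∑ k ∈ Finset.range (n+2), (if k < n+1 then S2 n k else 0) * x ^ k
        = ∑ k ∈ Finset.range (n+1), S2 n k * x ^ k := by
      rw [Finset.sum_range_succ, if_neg (lt_irrefl (n+1)), zero_mul, add_zero]
      apply Finset.sum_congr rfl
      intro k hk
      rw [if_pos (Finset.mem_range.1 hk)]
    rw [← e2', Finset.mul_sum, ← Finset.sum_add_distrib]
    apply Finset.sum_congr rfl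
    intro k _
    ring
  rw [lhs, rhs]
  conv_rhs => rw [Finset.sum_range_succ']
  have h0 : (S2 (n+1) 0 + (n:ℝ) * lam * (if 0 < n+1 then S2 n 0 else 0)) * x ^ 0 = 0 := by
    rw [if_pos (Nat.zero_lt_succ n), pow_zero, mul_one, key0]
  rw [h0, add_zero]
end
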